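/- Let n ≥ 3 be an odd integer and let u be a smooth solution of (-Δ)^{n/2} u = (n-1)! e^{nu} in ℝⁿ with V := ∫_{ℝⁿ} e^{nu} dx < ∞, and set v(x) := ((n-1)!/γ_n) ∫_{ℝⁿ} log((1+|y|)/|x-y|) e^{nu(y)} dy and α := 2V/|Sⁿ|. Then there exists a constant C > 0 such that v(x) ≥ -α log|x| - C for all |x| ≥ 4. -/

import Mathlib

open MeasureTheory Real Filter Metric
open scoped RealInnerProductSpace NNReal ENNReal Topology

noncomputable section

abbrev En (n : ℕ) := EuclideanSpace ℝ (Fin n)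

/-- `e1 n` is the first standard basis vector of `ℝⁿ`. -/
def e1 (n : ℕ) : En n :=
  if h : 0 < n then EuclideanSpace.single ⟨0, h⟩ (1:ℝ) else 0

/-- The normalizing constant `C_{n,σ}` of the fractional Laplacian. -/
def fracC (n : ℕ) (σ : ℝ) : ℝ :=
  (∫ x : En n, (1 - Real.cos (inner ℝ x (e1 n) : ℝ)) / ‖x‖ ^ ((n : ℝ) + 2 * σ))⁻¹

/-- Principal value fractional Laplacian `(-Δ)^σ g (x)`. -/
def fracLap {n : ℕ} (σ : ℝ) (g : En n → ℝ) (x : En n) : ℝ :=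
  fracC n σ * limUnder (𝓝[>] (0:ℝ)) fun ε =>
    ∫ y in {y : En n | ε < dist x y}, (g x - g y) / dist x y ^ ((n : ℝ) + 2 * σ)

/-- Partial derivative in the `i`-th coordinate direction. -/
def pderiv1 {n : ℕ} (i : Fin n) (f : En n → ℝ) : En n → ℝ :=
  fun x => fderiv ℝ f x (EuclideanSpace.single i 1)

/-- Multi-index derivative `D^α`. -/
def mderiv {n : ℕ} (α : Fin n → ℕ) (f : En n → ℝ) : En n → ℝ :=
  (List.finRange n).foldr (fun i g => (pderiv1 i)^[α i] g) f

/-- Order `|α|` of a multi-index. -/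
def mdeg {n : ℕ} (α : Fin n → ℕ) : ℕ := ∑ i, α i

/-- The Laplacian. -/
def lap {n : ℕ} (f : En n → ℝ) : En n → ℝ :=
  fun x => ∑ i, pderiv1 i (pderiv1 i f) x

/-- Iterated Laplacian `Δ^k`. -/
def iterLap {n : ℕ} (k : ℕ) (f : En n → ℝ) : En n → ℝ := lap^[k] f

/-- `(-Δ)^k f`. -/
def negIterLap {n : ℕ} (k : ℕ) (f : En n → ℝ) : En n → ℝ :=
  fun x => (-1 : ℝ)^k * iterLap k f x

/-- The space `L_s(ℝⁿ)`. -/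
def MemLs {n : ℕ} (s : ℝ) (v : En n → ℝ) : Prop :=
  LocallyIntegrable v volume ∧
    Integrable (fun x => |v x| / (1 + ‖x‖ ^ ((n : ℝ) + 2 * s))) volume

/-- `|Sᵐ|`, the volume of the round unit `m`-sphere. -/
def sphereVol (m : ℕ) : ℝ :=
  2 * Real.pi ^ (((m : ℝ) + 1) / 2) / Real.Gamma (((m : ℝ) + 1) / 2)

/-- The constant `γ_n = (n-1)! |Sⁿ| / 2`. -/
def gamConst (n : ℕ) : ℝ := (Nat.factorial (n - 1) : ℝ) * sphereVol n / 2

/-- The filter `|x| → ∞` on `ℝⁿ`. -/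
def atInf (n : ℕ) : Filter (En n) := Filter.comap (fun x => ‖x‖) Filter.atTop

/-- `P` is a polynomial of total degree at most `k`. -/
def IsPolyLe {n : ℕ} (k : ℕ) (P : En n → ℝ) : Prop :=
  ∃ p : MvPolynomial (Fin n) ℝ, p.totalDegree ≤ k ∧
    ∀ x, P x = MvPolynomial.eval (fun i => x i) p

/-- The logarithmic potential `(1/γ_n) ∫ log((1+|y|)/|x-y|) f(y) dy`. -/
def logPot (n : ℕ) (f : En n → ℝ) (x : En n) : ℝ :=
  (1 / gamConst n) * ∫ y, Real.log ((1 + ‖y‖) / ‖x - y‖) * f y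

/-- The function `v` associated to a solution `u` of the main equation. -/
def vFun (n : ℕ) (u : En n → ℝ) (x : En n) : ℝ :=
  ((Nat.factorial (n - 1) : ℝ) / gamConst n) *
    ∫ y, Real.log ((1 + ‖y‖) / ‖x - y‖) * Real.exp (n * u y)

/-- `u` is a smooth solution of `(-Δ)^{n/2} u = (n-1)! e^{nu}` with `∫ e^{nu} < ∞`:
`u` is smooth, `e^{nu} ∈ L¹`, `Δ^{(n-1)/2} u ∈ L_{1/2}`, and the equation holds when
tested against Schwartz functions. -/
def SmoothSolution (n : ℕ) (u : En n → ℝ) : Prop :=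
  ContDiff ℝ (⊤ : ℕ∞) u ∧
  Integrable (fun x => Real.exp (n * u x)) volume ∧
  MemLs (1/2) (iterLap ((n - 1) / 2) u) ∧
  ∀ φ : SchwartzMap (En n) ℝ,
    ∫ x, ((-1 : ℝ) ^ ((n - 1) / 2) * iterLap ((n - 1) / 2) u x) * fracLap (1/2) (⇑φ) x
      = (Nat.factorial (n - 1) : ℝ) * ∫ x, Real.exp (n * u x) * φ x

/-- `u` is a spherical solution. -/
def IsSpherical {n : ℕ} (u : En n → ℝ) : Prop :=
  ∃ lam : ℝ, 0 < lam ∧ ∃ x₀ : En n, ∀ x,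
    u x = Real.log (2 * lam / (1 + lam ^ 2 * ‖x - x₀‖ ^ 2))

/-- `g` is the weak (distributional) derivative `D^α u`. -/
def HasWeakDeriv {n : ℕ} (α : Fin n → ℕ) (u g : En n → ℝ) : Prop :=
  ∀ φ : En n → ℝ, ContDiff ℝ (⊤ : ℕ∞) φ → HasCompactSupport φ →
    ∫ x, u x * mderiv α φ x = (-1 : ℝ) ^ (mdeg α) * ∫ x, g x * φ x

/-- `u ∈ W^{k,1}_loc(ℝⁿ)`. -/
def MemWloc {n : ℕ} (k : ℕ) (u : En n → ℝ) : Prop :=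
  LocallyIntegrable u volume ∧
  ∀ α : Fin n → ℕ, mdeg α ≤ k →
    ∃ g : En n → ℝ, LocallyIntegrable g volume ∧ HasWeakDeriv α u g

/-- `L` is the weak iterated Laplacian `Δ^k u`. -/
def HasWeakIterLap {n : ℕ} (k : ℕ) (u L : En n → ℝ) : Prop :=
  ∀ φ : En n → ℝ, ContDiff ℝ (⊤ : ℕ∞) φ → HasCompactSupport φ →
    ∫ x, u x * iterLap k φ x = ∫ x, L x * φ x

/-- `∫_{B_R} u⁺ dx = o(R^{2n})` or `∫_{B_R} u⁻ dx = o(R^{2n})` as `R → ∞`. -/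
def SmallGrowth (n : ℕ) (u : En n → ℝ) : Prop :=
  Tendsto (fun R : ℝ => (∫ x in Metric.ball (0 : En n) R, max (u x) 0) / R ^ (2 * n))
    atTop (𝓝 0) ∨
  Tendsto (fun R : ℝ => (∫ x in Metric.ball (0 : En n) R, max (-u x) 0) / R ^ (2 * n))
    atTop (𝓝 0)

/-- Lemma 3.6: for a smooth solution `u` of
`(-Δ)^{n/2}u = (n-1)! e^{nu}` with `V = ∫ e^{nu} < ∞` and `v` its logarithmic potential,
there is `C > 0` with `v(x) ≥ -α log|x| - C` for `|x| ≥ 4`, where `α = 2V/|Sⁿ|`. -/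
theorem statement15 (n : ℕ) (hn : 3 ≤ n) (hodd : Odd n)
    (u : En n → ℝ) (hu : SmoothSolution n u) :
    ∃ C : ℝ, 0 < C ∧ ∀ x : En n, 4 ≤ ‖x‖ →
      vFun n u x ≥
        -(2 * (∫ y, Real.exp (n * u y)) / sphereVol n) * Real.log ‖x‖ - C := by
  obtain ⟨hu1, hu2, hu3, hu4⟩ := hu
  have hS : 0 < sphereVol n := by
    unfold sphereVol
    apply div_pos
    · positivity
    · exact Real.Gamma_pos_of_pos (by positivity)
  have hfac : (0:ℝ) < (Nat.factorial (n - 1) : ℝ) := by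
    exact_mod_cast Nat.factorial_pos _
  have hγ : 0 < gamConst n := by
    unfold gamConst; positivity
  have hc : (Nat.factorial (n - 1) : ℝ) / gamConst n = 2 / sphereVol n := by
    unfold gamConst
    field_simp
  refine ⟨1, one_pos, fun x hx => ?_⟩
  have hx0 : (1:ℝ) ≤ ‖x‖ := le_trans (by norm_num) hx
  have hlogx : 0 ≤ Real.log ‖x‖ := Real.log_nonneg hx0
  have hfpos : ∀ y : En n, 0 < Real.exp (n * u y) := fun y => Real.exp_pos _
  have hVnn : 0 ≤ ∫ y, Real.exp (n * u y) := integral_nonneg fun y => (hfpos y).le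
  by_cases hg : Integrable (fun y : En n =>
      Real.log ((1 + ‖y‖) / ‖x - y‖) * Real.exp (n * u y)) volume
  · -- integrable case
    have hpt : ∀ y : En n,
        0 ≤ (Real.log ((1 + ‖y‖) / ‖x - y‖) + Real.log ‖x‖) * Real.exp (n * u y) := by
      intro y
      apply mul_nonneg _ (hfpos y).le
      by_cases hxy : x = y
      · simp only [hxy, sub_self, norm_zero, div_zero, Real.log_zero, zero_add]
        exact hxy ▸ hlogx
      · have hd : 0 < ‖x - y‖ := by
          rw [norm_pos_iff, sub_ne_zero]; exact hxy
        have hyn : 0 ≤ ‖y‖ := norm_nonneg y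
        have hineq : ‖x - y‖ ≤ ‖x‖ * (1 + ‖y‖) := by
          have h1 : ‖x - y‖ ≤ ‖x‖ + ‖y‖ := norm_sub_le x y
          nlinarith
        have h2 : (‖x‖)⁻¹ ≤ (1 + ‖y‖) / ‖x - y‖ := by
          rw [inv_eq_one_div, div_le_div_iff₀ (by linarith) hd]
          nlinarith
        have h3 : Real.log (‖x‖)⁻¹ ≤ Real.log ((1 + ‖y‖) / ‖x - y‖) :=
          Real.log_le_log (by positivity) h2
        rw [Real.log_inv] at h3
        linarith
    have hint2 : Integrable (fun y : En n => Real.log ‖x‖ * Real.exp (n * u y)) volume :=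
      hu2.const_mul _
    have h0 : 0 ≤ ∫ y, (Real.log ((1 + ‖y‖) / ‖x - y‖) + Real.log ‖x‖)
        * Real.exp (n * u y) := integral_nonneg hpt
    have heq : (∫ y, (Real.log ((1 + ‖y‖) / ‖x - y‖) + Real.log ‖x‖)
          * Real.exp (n * u y))
        = (∫ y, Real.log ((1 + ‖y‖) / ‖x - y‖) * Real.exp (n * u y))
          + Real.log ‖x‖ * ∫ y, Real.exp (n * u y) := by
      simp only [add_mul]
      rw [integral_add hg hint2, integral_const_mul]
    have hkey : 0 ≤ (∫ y, Real.log ((1 + ‖y‖) / ‖x - y‖) * Real.exp (n * u y))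
        + Real.log ‖x‖ * ∫ y, Real.exp (n * u y) := heq ▸ h0
    have hv : vFun n u x
        = (2 / sphereVol n) * ∫ y, Real.log ((1 + ‖y‖) / ‖x - y‖) * Real.exp (n * u y) := by
      unfold vFun
      rw [hc]
    rw [ge_iff_le, hv]
    have h2S : (0:ℝ) < 2 / sphereVol n := by positivity
    have := mul_le_mul_of_nonneg_left hkey h2S.le
    have hrw : -(2 * (∫ y, Real.exp (n * u y)) / sphereVol n) * Real.log ‖x‖
        = -((2 / sphereVol n) * (Real.log ‖x‖ * ∫ y, Real.exp (n * u y))) := by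
      ring
    rw [hrw]
    rw [mul_zero, mul_add] at this
    linarith
  · -- non-integrable case: vFun = c * 0 = 0
    have hv0 : vFun n u x = 0 := by
      unfold vFun
      rw [integral_undef hg, mul_zero]
    rw [hv0]
    have h1 : 0 ≤ 2 * (∫ y, Real.exp (n * u y)) / sphereVol n * Real.log ‖x‖ :=
      mul_nonneg (by positivity) hlogx
    linarith
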